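/- Let A and B be linear subspaces of ℝ^n. Then (A ∩ B) + (A^⊥ ∩ B^⊥) = (A + (A^⊥ ∩ B^⊥)) ∩ (B + (A^⊥ ∩ B^⊥)). In particular, the fixed point set of the Douglas–Rachford operator T_DR = ½(R_A R_B + Id), which equals (A ∩ B) + (A^⊥ ∩ B^⊥), coincides with the intersection Ã ∩ B̃ of the enlargements Ã = A + (A^⊥ ∩ B^⊥) and B̃ = B + (A^⊥ ∩ B^⊥). -/

import Mathlib

/-!
`Aᗮ ⊓ Bᗮ = (A ⊔ B)ᗮ` is disjoint from `A ⊔ B`, and in a modular lattice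
`(a ⊔ c) ⊓ (b ⊔ c) = a ⊓ b ⊔ c` whenever `c` is disjoint from `a ⊔ b`. Since reflections are involutions, `R_A R_B x = x` means
`R_B x = R_A x`, i.e. `P_A x = P_B x`; such an `x` splits as `P_A x ∈ A ⊓ B` plus
`x - P_A x ∈ Aᗮ ⊓ Bᗮ`, and conversely both projections of such a sum are its first summand.
-/

/-- The reflection across a subspace `K` of Euclidean space, `R_K = 2 P_K - Id`. -/
noncomputable def reflS {n : ℕ} (K : Submodule ℝ (EuclideanSpace ℝ (Fin n)))
    (x : EuclideanSpace ℝ (Fin n)) : EuclideanSpace ℝ (Fin n) :=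
  (2:ℝ) • (K.orthogonalProjectionOnto x : EuclideanSpace ℝ (Fin n)) - x

theorem sup_inf_sup_eq_inf_sup_of_disjoint {α : Type*} [Lattice α] [OrderBot α]
    [IsModularLattice α] {a b c : α} (h : Disjoint c (a ⊔ b)) :
    (a ⊔ c) ⊓ (b ⊔ c) = a ⊓ b ⊔ c := by
  refine le_antisymm ?_ <|
    le_inf (sup_le_sup_right inf_le_left _) (sup_le_sup_right inf_le_right _)
  -- modularity twice: `(a ⊔ c) ⊓ (b ⊔ c) = c ⊔ b ⊓ (a ⊔ c)` and `(a ⊔ b) ⊓ (a ⊔ c) = a`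
  have hac : (a ⊔ b) ⊓ (a ⊔ c) = a := by
    rw [inf_comm, sup_inf_assoc_of_le c le_sup_left, h.eq_bot, sup_bot_eq]
  have hb : b ⊓ (a ⊔ c) ≤ a ⊓ b :=
    le_inf ((inf_le_inf_right _ le_sup_right).trans hac.le) inf_le_left
  calc (a ⊔ c) ⊓ (b ⊔ c) = c ⊔ b ⊓ (a ⊔ c) := by
        rw [inf_comm, sup_comm b, sup_inf_assoc_of_le b le_sup_right]
    _ ≤ a ⊓ b ⊔ c := by rw [sup_comm]; exact sup_le_sup_right hb c

namespace Submodule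

variable {𝕜 E : Type*} [RCLike 𝕜] [NormedAddCommGroup E] [InnerProductSpace 𝕜 E]

theorem disjoint_inf_orthogonal_sup (A B : Submodule 𝕜 E) :
    Disjoint (Aᗮ ⊓ Bᗮ) (A ⊔ B) := by
  rw [inf_orthogonal]
  exact (orthogonal_disjoint _).symm

theorem inf_sup_inf_orthogonal_eq (A B : Submodule 𝕜 E) :
    A ⊓ B ⊔ Aᗮ ⊓ Bᗮ = (A ⊔ Aᗮ ⊓ Bᗮ) ⊓ (B ⊔ Aᗮ ⊓ Bᗮ) :=
  (sup_inf_sup_eq_inf_sup_of_disjoint (disjoint_inf_orthogonal_sup A B)).symm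

variable {A B : Submodule 𝕜 E} [A.HasOrthogonalProjection] [B.HasOrthogonalProjection]

theorem starProjection_eq_starProjection_iff {x : E} :
    A.starProjection x = B.starProjection x ↔ x ∈ A ⊓ B ⊔ Aᗮ ⊓ Bᗮ := by
  constructor
  · intro h
    refine mem_sup.mpr ⟨A.starProjection x, ⟨coe_mem _, h ▸ coe_mem _⟩,
      x - A.starProjection x, ⟨sub_starProjection_mem_orthogonal x, ?_⟩, add_sub_cancel _ _⟩
    exact h ▸ sub_starProjection_mem_orthogonal x
  · intro hx
    obtain ⟨w, hw, c, hc, rfl⟩ := mem_sup.mp hx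
    rw [eq_starProjection_of_mem_orthogonal' hw.1 hc.1 rfl,
      eq_starProjection_of_mem_orthogonal' hw.2 hc.2 rfl]

theorem reflection_reflection_eq_self_iff {x : E} :
    A.reflection (B.reflection x) = x ↔ x ∈ A ⊓ B ⊔ Aᗮ ⊓ Bᗮ := by
  rw [← starProjection_eq_starProjection_iff, ← A.reflection.injective.eq_iff,
    reflection_reflection, eq_comm, reflection_apply, reflection_apply, sub_left_inj,
    two_nsmul, two_nsmul, ← two_smul 𝕜, ← two_smul 𝕜]
  exact (smul_right_injective E two_ne_zero).eq_iff

end Submodule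

theorem one_half_smul_add_eq_self_iff {E : Type*} [AddCommGroup E] [Module ℝ E] {x y : E} :
    (1 / 2 : ℝ) • (y + x) = x ↔ y = x := by
  constructor
  · intro h
    have h2 : y + x = x + x := calc
      y + x = ((2 : ℝ) * (1 / 2)) • (y + x) := by rw [mul_one_div_cancel two_ne_zero, one_smul]
      _ = x + x := by rw [← smul_smul, h, two_smul]
    exact add_right_cancel h2
  · rintro rfl
    rw [← two_smul ℝ y, smul_smul, one_div_mul_cancel two_ne_zero, one_smul]

theorem reflS_eq_reflection {n : ℕ} (K : Submodule ℝ (EuclideanSpace ℝ (Fin n)))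
    (x : EuclideanSpace ℝ (Fin n)) : reflS K x = K.reflection x := by
  rw [Submodule.reflection_apply, reflS, two_smul, two_smul]
  rfl

/-- For linear subspaces `A, B` of ℝⁿ:
`(A ∩ B) + (A^⊥ ∩ B^⊥) = (A + (A^⊥ ∩ B^⊥)) ∩ (B + (A^⊥ ∩ B^⊥))`, and the fixed point set
of the Douglas–Rachford operator `T = ½(R_A R_B + Id)` equals `(A ∩ B) + (A^⊥ ∩ B^⊥)`,
hence coincides with the intersection `Ã ∩ B̃` of the enlargements. -/
theorem stmt17 {n : ℕ} (A B : Submodule ℝ (EuclideanSpace ℝ (Fin n))) :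
    ((A ⊓ B) ⊔ (Aᗮ ⊓ Bᗮ) = (A ⊔ (Aᗮ ⊓ Bᗮ)) ⊓ (B ⊔ (Aᗮ ⊓ Bᗮ))) ∧
    {x : EuclideanSpace ℝ (Fin n) | (1/2 : ℝ) • (reflS A (reflS B x) + x) = x} =
      ((A ⊓ B) ⊔ (Aᗮ ⊓ Bᗮ) : Submodule ℝ (EuclideanSpace ℝ (Fin n))) := by
  refine ⟨Submodule.inf_sup_inf_orthogonal_eq A B, Set.ext fun x => ?_⟩
  rw [Set.mem_ofPred_eq, one_half_smul_add_eq_self_iff, reflS_eq_reflection, reflS_eq_reflection]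
  exact Submodule.reflection_reflection_eq_self_iff
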